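/- Let g : ℝ² → symmetric 2×2 real matrices be smooth with det g(x) < 0 for all x; set √g := √(−det g) and let g^{αβ} denote the entries of the inverse matrix. For a smooth map X : ℝ² → ℝ^D define the Lagrangian density L[X](x) := ½ √g(x) g^{αβ}(x) ∂_αX^μ(x) ∂_βX^ν(x) G_{μν}(X(x)) + B_{μν}(X(x)) ∂_+X^μ(x) ∂_−X^ν(x), where α,β range over the two coordinates x^+, x^−. If (ζ, b) is a Killing pair, then with b̃_μ := b_μ + B_{μν}ζ^ν, for every smooth X and every x ∈ ℝ²: (d/dt)|_{t=0} L[X + t·(ζ∘X)](x) = ∂_−( b̃_μ(X)·∂_+X^μ )(x) − ∂_+( b̃_μ(X)·∂_−X^μ )(x). In particular, the first variation of the sigma-model Lagrangian under δX^μ = ζ^μ(X) is a total divergence, so Killing pairs generate rigid symmetries of the action. -/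

import Mathlib

noncomputable section

/-- Partial derivative of `f` at `x` in the `μ`-th coordinate direction. -/
def pd {D : ℕ} (μ : Fin D) (f : (Fin D → ℝ) → ℝ) (x : Fin D → ℝ) : ℝ :=
  fderiv ℝ f x (Pi.single μ 1)

/-- A smooth real-valued function. -/
def Sm {D : ℕ} (f : (Fin D → ℝ) → ℝ) : Prop := ContDiff ℝ (⊤ : ℕ∞) f

/-- A smooth vector field on `ℝ^D`. -/
def SmoothVF {D : ℕ} (V : (Fin D → ℝ) → Fin D → ℝ) : Prop := ∀ μ, Sm fun x => V x μ

/-- A smooth field of 2-tensors on `ℝ^D`. -/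
def Smooth2T {D : ℕ} (T : (Fin D → ℝ) → Fin D → Fin D → ℝ) : Prop :=
  ∀ μ ν, Sm fun x => T x μ ν

/-- The connection coefficients `Γ_{μν,ρ} = ½(∂_μG_{νρ} + ∂_νG_{μρ} − ∂_ρG_{μν})`. -/
def Gam {D : ℕ} (G : (Fin D → ℝ) → Fin D → Fin D → ℝ) (μ ν ρ : Fin D) (x : Fin D → ℝ) : ℝ :=
  (pd μ (fun y => G y ν ρ) x + pd ν (fun y => G y μ ρ) x - pd ρ (fun y => G y μ ν) x) / 2

/-- The torsion `H_{μνρ} = ∂_μB_{νρ} + ∂_νB_{ρμ} + ∂_ρB_{μν}`. -/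
def Htor {D : ℕ} (B : (Fin D → ℝ) → Fin D → Fin D → ℝ) (μ ν ρ : Fin D) (x : Fin D → ℝ) : ℝ :=
  pd μ (fun y => B y ν ρ) x + pd ν (fun y => B y ρ μ) x + pd ρ (fun y => B y μ ν) x

/-- `Γ⁺_{μν,ρ} = Γ_{μν,ρ} + ½H_{μνρ}`. -/
def GamP {D : ℕ} (G B : (Fin D → ℝ) → Fin D → Fin D → ℝ) (μ ν ρ : Fin D) (x : Fin D → ℝ) : ℝ :=
  Gam G μ ν ρ x + Htor B μ ν ρ x / 2

/-- `Γ⁻_{μν,ρ} = Γ_{μν,ρ} − ½H_{μνρ}`. -/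
def GamM {D : ℕ} (G B : (Fin D → ℝ) → Fin D → Fin D → ℝ) (μ ν ρ : Fin D) (x : Fin D → ℝ) : ℝ :=
  Gam G μ ν ρ x - Htor B μ ν ρ x / 2

/-- The lowered components `V_μ = G_{μν}V^ν` of a vector field. -/
def lowerV {D : ℕ} (G : (Fin D → ℝ) → Fin D → Fin D → ℝ)
    (V : (Fin D → ℝ) → Fin D → ℝ) (μ : Fin D) (x : Fin D → ℝ) : ℝ :=
  ∑ ν, G x μ ν * V x ν

/-- The covariant derivative `D⁺_μV_ν = G_{νρ}∂_μV^ρ + Γ⁺_{μρ,ν}V^ρ`. -/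
def Dp {D : ℕ} (G B : (Fin D → ℝ) → Fin D → Fin D → ℝ)
    (V : (Fin D → ℝ) → Fin D → ℝ) (μ ν : Fin D) (x : Fin D → ℝ) : ℝ :=
  (∑ ρ, G x ν ρ * pd μ (fun y => V y ρ) x) + ∑ ρ, GamP G B μ ρ ν x * V x ρ

/-- The covariant derivative `D⁻_μV_ν = G_{νρ}∂_μV^ρ + Γ⁻_{μρ,ν}V^ρ`. -/
def Dm {D : ℕ} (G B : (Fin D → ℝ) → Fin D → Fin D → ℝ)
    (V : (Fin D → ℝ) → Fin D → ℝ) (μ ν : Fin D) (x : Fin D → ℝ) : ℝ :=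
  (∑ ρ, G x ν ρ * pd μ (fun y => V y ρ) x) + ∑ ρ, GamM G B μ ρ ν x * V x ρ

/-- The Lie derivative of the metric:
`(ℒ_ζG)_{μν} = ζ^ρ∂_ρG_{μν} + ∂_μζ^ρ·G_{ρν} + ∂_νζ^ρ·G_{μρ}`. -/
def lieG {D : ℕ} (G : (Fin D → ℝ) → Fin D → Fin D → ℝ)
    (ζ : (Fin D → ℝ) → Fin D → ℝ) (μ ν : Fin D) (x : Fin D → ℝ) : ℝ :=
  (∑ ρ, ζ x ρ * pd ρ (fun y => G y μ ν) x)
    + (∑ ρ, pd μ (fun y => ζ y ρ) x * G x ρ ν)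
    + ∑ ρ, pd ν (fun y => ζ y ρ) x * G x μ ρ

/-- A Killing pair `(ζ, b)`: `D⁻_μζ_ν + D⁺_νζ_μ + ∂_μb_ν − ∂_νb_μ = 0`. -/
def IsKillingPair {D : ℕ} (G B : (Fin D → ℝ) → Fin D → Fin D → ℝ)
    (ζ b : (Fin D → ℝ) → Fin D → ℝ) : Prop :=
  ∀ (μ ν : Fin D) (x : Fin D → ℝ),
    Dm G B ζ μ ν x + Dp G B ζ ν μ x
      + pd μ (fun y => b y ν) x - pd ν (fun y => b y μ) x = 0

/-- The sigma-model Lagrangian density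
`½√g g^{αβ} ∂_αX^μ ∂_βX^ν G_{μν}(X) + B_{μν}(X) ∂₊X^μ ∂₋X^ν`;
the world-sheet coordinates are `x⁺ = 0`, `x⁻ = 1` and `√g = √(−det g)`. -/
def Lag {D : ℕ} (G B : (Fin D → ℝ) → Fin D → Fin D → ℝ)
    (g : (Fin 2 → ℝ) → Matrix (Fin 2) (Fin 2) ℝ)
    (X : (Fin 2 → ℝ) → Fin D → ℝ) (x : Fin 2 → ℝ) : ℝ :=
  (Real.sqrt (-(g x).det) *
      ∑ α, ∑ β, (g x)⁻¹ α β *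
        ∑ μ, ∑ ν, pd α (fun y => X y μ) x * pd β (fun y => X y ν) x * G (X x) μ ν) / 2
    + ∑ μ, ∑ ν, B (X x) μ ν * pd 0 (fun y => X y μ) x * pd 1 (fun y => X y ν) x

/-! Under `X ↦ X + t ζ(X)` the pullback `X^*T` of any 2-tensor field changes to first order by
`X^*(ℒ_ζT)`. Splitting the Killing equation into symmetric and antisymmetric parts gives
`ℒ_ζG = 0` and `ι_ζH = −db`, so Cartan's formula `ℒ_ζB = ι_ζ dB + d ι_ζB` yields `ℒ_ζB = −db̃`.
Hence the variation of the Lagrangian is `−(X^*db̃)_{+−} = (d X^*b̃)_{−+}`, because pullback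
commutes with `d`; this is the stated divergence. -/

open scoped Matrix

section Calculus

variable {n D : ℕ}

lemma Sm.differentiable {f : (Fin n → ℝ) → ℝ} (hf : Sm f) : Differentiable ℝ f :=
  ContDiff.differentiable hf (by simp)

lemma fderiv_apply_eq_sum_pd (f : (Fin D → ℝ) → ℝ) (z v : Fin D → ℝ) :
    fderiv ℝ f z v = ∑ ρ, v ρ * pd ρ f z := by
  conv_lhs => rw [← Finset.univ_sum_single v]
  simp only [map_sum, pd]
  refine Finset.sum_congr rfl fun ρ _ => ?_
  have hsingle : Pi.single ρ (v ρ) = v ρ • (Pi.single ρ 1 : Fin D → ℝ) := by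
    rw [← Pi.single_smul, smul_eq_mul, mul_one]
  rw [hsingle, map_smul, smul_eq_mul]

lemma pd_add {f g : (Fin n → ℝ) → ℝ} {x : Fin n → ℝ}
    (hf : DifferentiableAt ℝ f x) (hg : DifferentiableAt ℝ g x) (α : Fin n) :
    pd α (fun y => f y + g y) x = pd α f x + pd α g x := by
  simp [pd, fderiv_fun_add hf hg]

lemma pd_const_mul {f : (Fin n → ℝ) → ℝ} {x : Fin n → ℝ}
    (hf : DifferentiableAt ℝ f x) (c : ℝ) (α : Fin n) :
    pd α (fun y => c * f y) x = c * pd α f x := by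
  simp [pd, fderiv_const_mul hf c]

lemma pd_mul {f g : (Fin n → ℝ) → ℝ} {x : Fin n → ℝ}
    (hf : DifferentiableAt ℝ f x) (hg : DifferentiableAt ℝ g x) (α : Fin n) :
    pd α (fun y => f y * g y) x = f x * pd α g x + g x * pd α f x := by
  simp [pd, fderiv_fun_mul hf hg]

lemma pd_sum {ι : Type*} {s : Finset ι} {f : ι → (Fin n → ℝ) → ℝ} {x : Fin n → ℝ}
    (hf : ∀ i ∈ s, DifferentiableAt ℝ (f i) x) (α : Fin n) :
    pd α (fun y => ∑ i ∈ s, f i y) x = ∑ i ∈ s, pd α (f i) x := by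
  simp [pd, fderiv_fun_sum hf]

lemma pd_neg (f : (Fin n → ℝ) → ℝ) (α : Fin n) (x : Fin n → ℝ) :
    pd α (fun y => -f y) x = -pd α f x := by
  simp [pd]

lemma pd_comp {f : (Fin D → ℝ) → ℝ} {X : (Fin n → ℝ) → Fin D → ℝ} {x : Fin n → ℝ}
    (hf : DifferentiableAt ℝ f (X x)) (hX : ∀ μ, DifferentiableAt ℝ (fun y => X y μ) x)
    (α : Fin n) :
    pd α (fun y => f (X y)) x = ∑ ρ, pd ρ f (X x) * pd α (fun y => X y ρ) x := by
  have hX' : DifferentiableAt ℝ X x := differentiableAt_pi.mpr hX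
  rw [pd, fderiv_fun_comp x hf hX', ContinuousLinearMap.comp_apply, fderiv_apply_eq_sum_pd]
  refine Finset.sum_congr rfl fun ρ _ => ?_
  rw [fderiv_pi hX, mul_comm]
  rfl

lemma hasDerivAt_comp_add_smul {f : (Fin D → ℝ) → ℝ} {z : Fin D → ℝ}
    (hf : DifferentiableAt ℝ f z) (v : Fin D → ℝ) :
    HasDerivAt (fun t : ℝ => f (z + t • v)) (∑ ρ, v ρ * pd ρ f z) 0 := by
  have hline : HasDerivAt (fun t : ℝ => z + t • v) v 0 := by
    simpa using ((hasDerivAt_id (0 : ℝ)).smul_const v).const_add z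
  rw [← fderiv_apply_eq_sum_pd]
  exact (by simpa using hf.hasFDerivAt : HasFDerivAt f (fderiv ℝ f z) (z + (0 : ℝ) • v))
    |>.comp_hasDerivAt 0 hline

lemma pd_comm {f : (Fin n → ℝ) → ℝ} (hf : ContDiff ℝ 2 f) (α β : Fin n) (x : Fin n → ℝ) :
    pd α (pd β f) x = pd β (pd α f) x := by
  have hsymm : IsSymmSndFDerivAt ℝ f x := hf.contDiffAt.isSymmSndFDerivAt (by simp)
  have hdf : DifferentiableAt ℝ (fderiv ℝ f) x :=
    (hf.fderiv_right (m := 1) le_rfl).differentiable one_ne_zero x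
  have hsnd : ∀ u w : Fin n → ℝ,
      fderiv ℝ (fun y => fderiv ℝ f y u) x w = fderiv ℝ (fderiv ℝ f) x w u := by
    intro u w
    rw [fderiv_clm_apply hdf (differentiableAt_const u)]
    simp
  change fderiv ℝ (fun y => fderiv ℝ f y (Pi.single β 1)) x (Pi.single α 1)
    = fderiv ℝ (fun y => fderiv ℝ f y (Pi.single α 1)) x (Pi.single β 1)
  rw [hsnd, hsnd, hsymm.eq]

end Calculus

/-- The components of the exterior derivative `dc` of a covector field. -/
def curl {D : ℕ} (c : (Fin D → ℝ) → Fin D → ℝ) (z : Fin D → ℝ) (μ ν : Fin D) : ℝ :=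
  pd μ (fun y => c y ν) z - pd ν (fun y => c y μ) z

lemma curl_add {D : ℕ} {c d : (Fin D → ℝ) → Fin D → ℝ} {z : Fin D → ℝ}
    (hc : ∀ μ, DifferentiableAt ℝ (fun y => c y μ) z)
    (hd : ∀ μ, DifferentiableAt ℝ (fun y => d y μ) z) (μ ν : Fin D) :
    curl (fun y μ => c y μ + d y μ) z μ ν = curl c z μ ν + curl d z μ ν := by
  simp only [curl, pd_add (hc _) (hd _)]
  ring

def bTilde {D : ℕ} (B : (Fin D → ℝ) → Fin D → Fin D → ℝ) (ζ b : (Fin D → ℝ) → Fin D → ℝ) :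
    (Fin D → ℝ) → Fin D → ℝ :=
  fun y μ => b y μ + ∑ ν, B y μ ν * ζ y ν

section Killing

variable {D : ℕ} {G B : (Fin D → ℝ) → Fin D → Fin D → ℝ} {ζ b : (Fin D → ℝ) → Fin D → ℝ}

lemma pd_comm_indices_of_symm (hG : ∀ x μ ν, G x μ ν = G x ν μ) (α μ ν : Fin D)
    (z : Fin D → ℝ) : pd α (fun y => G y μ ν) z = pd α (fun y => G y ν μ) z := by
  simp only [hG _ μ ν]

lemma pd_comm_indices_of_antisymm (hB : ∀ x μ ν, B x μ ν = -B x ν μ) (α μ ν : Fin D)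
    (z : Fin D → ℝ) : pd α (fun y => B y μ ν) z = -pd α (fun y => B y ν μ) z := by
  simp only [hB _ μ ν, pd_neg]

lemma lieG_comm (hG : ∀ x μ ν, G x μ ν = G x ν μ) (μ ν : Fin D) (z : Fin D → ℝ) : lieG G ζ μ ν z = lieG G ζ ν μ z := by
  simp only [lieG, ← Finset.sum_add_distrib]
  refine Finset.sum_congr rfl fun ρ _ => ?_
  linear_combination ζ z ρ * pd_comm_indices_of_symm hG ρ μ ν z
    + pd μ (fun y => ζ y ρ) z * hG z ρ ν + pd ν (fun y => ζ y ρ) z * hG z μ ρ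

lemma Htor_comm_of_antisymm (hB : ∀ x μ ν, B x μ ν = -B x ν μ) (μ ν ρ : Fin D)
    (z : Fin D → ℝ) : Htor B ν μ ρ z = -Htor B μ ν ρ z := by
  simp only [Htor]
  linear_combination pd_comm_indices_of_antisymm hB ν μ ρ z
    + pd_comm_indices_of_antisymm hB μ ρ ν z + pd_comm_indices_of_antisymm hB ρ ν μ z

/-- The symmetric part of `D⁻_μζ_ν + D⁺_νζ_μ` is `ℒ_ζG`, its antisymmetric part `ζ^ρH_{μνρ}`. -/
lemma Dm_add_Dp_eq (hG : ∀ x μ ν, G x μ ν = G x ν μ) (hB : ∀ x μ ν, B x μ ν = -B x ν μ)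
    (μ ν : Fin D) (z : Fin D → ℝ) :
    Dm G B ζ μ ν z + Dp G B ζ ν μ z = lieG G ζ μ ν z + ∑ ρ, ζ z ρ * Htor B μ ν ρ z := by
  simp only [Dm, Dp, lieG, GamM, GamP, Gam, Htor, ← Finset.sum_add_distrib]
  refine Finset.sum_congr rfl fun ρ _ => ?_
  linear_combination pd μ (fun y => ζ y ρ) z * hG z ν ρ
    + ζ z ρ / 2 * (pd_comm_indices_of_symm hG μ ρ ν z + pd_comm_indices_of_symm hG ν ρ μ z
      + pd_comm_indices_of_symm hG ρ ν μ z)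
    - ζ z ρ / 2 * (pd_comm_indices_of_antisymm hB μ ρ ν z
      + pd_comm_indices_of_antisymm hB ρ ν μ z + pd_comm_indices_of_antisymm hB ν μ ρ z)

lemma IsKillingPair.lieG_eq_zero (hK : IsKillingPair G B ζ b)
    (hG : ∀ x μ ν, G x μ ν = G x ν μ) (hB : ∀ x μ ν, B x μ ν = -B x ν μ)
    (μ ν : Fin D) (z : Fin D → ℝ) : lieG G ζ μ ν z = 0 := by
  have hμν := hK μ ν z
  have hνμ := hK ν μ z
  rw [Dm_add_Dp_eq hG hB] at hμν hνμ
  have hH : ∑ ρ, ζ z ρ * Htor B ν μ ρ z = -∑ ρ, ζ z ρ * Htor B μ ν ρ z := by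
    simp only [Htor_comm_of_antisymm hB μ ν, mul_neg, Finset.sum_neg_distrib]
  rw [lieG_comm hG ν μ, hH] at hνμ
  linarith

lemma IsKillingPair.sum_mul_Htor (hK : IsKillingPair G B ζ b)
    (hG : ∀ x μ ν, G x μ ν = G x ν μ) (hB : ∀ x μ ν, B x μ ν = -B x ν μ)
    (μ ν : Fin D) (z : Fin D → ℝ) : ∑ ρ, ζ z ρ * Htor B μ ν ρ z = -curl b z μ ν := by
  have hμν := hK μ ν z
  rw [Dm_add_Dp_eq hG hB, hK.lieG_eq_zero hG hB] at hμν
  rw [curl]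
  linarith

/-- Cartan's formula `ℒ_ζB = ι_ζ dB + d ι_ζB` in components, with `ι_ζB` written `−B_{μν}ζ^ν`. -/
lemma lieG_eq_sum_mul_Htor_sub_curl (hB : ∀ x μ ν, B x μ ν = -B x ν μ) {z : Fin D → ℝ}
    (hBd : ∀ μ ν, DifferentiableAt ℝ (fun y => B y μ ν) z)
    (hζd : ∀ μ, DifferentiableAt ℝ (fun y => ζ y μ) z) (μ ν : Fin D) :
    lieG B ζ μ ν z
      = ∑ ρ, ζ z ρ * Htor B μ ν ρ z - curl (fun y μ => ∑ ν, B y μ ν * ζ y ν) z μ ν := by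
  simp only [curl, lieG, Htor]
  rw [pd_sum (f := fun σ y => B y ν σ * ζ y σ) fun σ _ => (hBd ν σ).mul (hζd σ),
    pd_sum (f := fun σ y => B y μ σ * ζ y σ) fun σ _ => (hBd μ σ).mul (hζd σ)]
  simp only [pd_mul (hBd _ _) (hζd _), ← Finset.sum_sub_distrib, ← Finset.sum_add_distrib]
  refine Finset.sum_congr rfl fun σ _ => ?_
  linear_combination pd μ (fun y => ζ y σ) z * hB z σ ν
    - ζ z σ * pd_comm_indices_of_antisymm hB ν μ σ z

lemma IsKillingPair.lieG_eq_curl_bTilde (hK : IsKillingPair G B ζ b)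
    (hG : ∀ x μ ν, G x μ ν = G x ν μ) (hB : ∀ x μ ν, B x μ ν = -B x ν μ) {z : Fin D → ℝ}
    (hBd : ∀ μ ν, DifferentiableAt ℝ (fun y => B y μ ν) z)
    (hζd : ∀ μ, DifferentiableAt ℝ (fun y => ζ y μ) z)
    (hbd : ∀ μ, DifferentiableAt ℝ (fun y => b y μ) z) (μ ν : Fin D) :
    lieG B ζ μ ν z = curl (bTilde B ζ b) z ν μ := by
  have hBζd : ∀ μ, DifferentiableAt ℝ (fun y => ∑ ν, B y μ ν * ζ y ν) z := fun μ =>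
    DifferentiableAt.fun_sum fun ν _ => (hBd μ ν).mul (hζd ν)
  unfold bTilde
  rw [lieG_eq_sum_mul_Htor_sub_curl hB hBd hζd, hK.sum_mul_Htor hG hB, curl_add hbd hBζd]
  simp only [curl]
  ring

end Killing

lemma hasDerivAt_matrix_mul_apply {𝕜 l m p : Type*} [NontriviallyNormedField 𝕜] [Fintype m]
    {A : 𝕜 → Matrix l m 𝕜} {B : 𝕜 → Matrix m p 𝕜} {A' : Matrix l m 𝕜} {B' : Matrix m p 𝕜} {t : 𝕜}
    (hA : ∀ i j, HasDerivAt (fun s => A s i j) (A' i j) t)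
    (hB : ∀ j k, HasDerivAt (fun s => B s j k) (B' j k) t) (i : l) (k : p) :
    HasDerivAt (fun s => (A s * B s) i k) ((A' * B t + A t * B') i k) t := by
  simp only [Matrix.mul_apply, Matrix.add_apply, ← Finset.sum_add_distrib]
  exact HasDerivAt.fun_sum fun j _ => (hA i j).mul (hB j k)

section Pullback

variable {n D : ℕ}

def jac (X : (Fin n → ℝ) → Fin D → ℝ) (x : Fin n → ℝ) : Matrix (Fin D) (Fin n) ℝ :=
  Matrix.of fun μ α => pd α (fun y => X y μ) x

def pullback (T : (Fin D → ℝ) → Fin D → Fin D → ℝ) (X : (Fin n → ℝ) → Fin D → ℝ)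
    (x : Fin n → ℝ) : Matrix (Fin n) (Fin n) ℝ :=
  (jac X x)ᵀ * Matrix.of (T (X x)) * jac X x

def pullback₁ (c : (Fin D → ℝ) → Fin D → ℝ) (X : (Fin n → ℝ) → Fin D → ℝ)
    (y : Fin n → ℝ) (α : Fin n) : ℝ :=
  ∑ μ, c (X y) μ * pd α (fun z => X z μ) y

lemma pullback_apply (T : (Fin D → ℝ) → Fin D → Fin D → ℝ) (X : (Fin n → ℝ) → Fin D → ℝ)
    (x : Fin n → ℝ) (α β : Fin n) :
    pullback T X x α β
      = ∑ μ, ∑ ν, pd α (fun y => X y μ) x * pd β (fun y => X y ν) x * T (X x) μ ν := by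
  simp only [pullback, jac, Matrix.mul_apply, Matrix.transpose_apply, Matrix.of_apply,
    Finset.sum_mul]
  rw [Finset.sum_comm]
  exact Finset.sum_congr rfl fun μ _ => Finset.sum_congr rfl fun ν _ => by ring

lemma pullback_zero (X : (Fin n → ℝ) → Fin D → ℝ) (x : Fin n → ℝ) :
    pullback (fun _ _ _ => 0) X x = 0 := by
  ext α β
  simp [pullback_apply]

lemma pullback_swap (T : (Fin D → ℝ) → Fin D → Fin D → ℝ) (X : (Fin n → ℝ) → Fin D → ℝ)
    (x : Fin n → ℝ) (α β : Fin n) :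
    pullback (fun z μ ν => T z ν μ) X x α β = pullback T X x β α := by
  rw [pullback_apply, pullback_apply, Finset.sum_comm]
  exact Finset.sum_congr rfl fun μ _ => Finset.sum_congr rfl fun ν _ => by ring

lemma jac_variation {ζ : (Fin D → ℝ) → Fin D → ℝ} {X : (Fin n → ℝ) → Fin D → ℝ} {x : Fin n → ℝ}
    (hζ : ∀ μ, DifferentiableAt ℝ (fun z => ζ z μ) (X x))
    (hX : ∀ μ, DifferentiableAt ℝ (fun y => X y μ) x) (t : ℝ) :
    jac (fun y μ => X y μ + t * ζ (X y) μ) x = jac X x + t • (jac ζ (X x) * jac X x) := by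
  ext μ α
  have hζX : DifferentiableAt ℝ (fun y => ζ (X y) μ) x :=
    (hζ μ).comp x (differentiableAt_pi.mpr hX)
  simp only [jac, Matrix.of_apply, Matrix.add_apply, Matrix.smul_apply, Matrix.mul_apply,
    smul_eq_mul, pd_add (hX μ) (hζX.const_mul t), pd_const_mul hζX, pd_comp (hζ μ) hX]

lemma of_lieG (T : (Fin D → ℝ) → Fin D → Fin D → ℝ) (ζ : (Fin D → ℝ) → Fin D → ℝ)
    (z : Fin D → ℝ) :
    Matrix.of (fun μ ν => lieG T ζ μ ν z)
      = Matrix.of (fun μ ν => ∑ ρ, ζ z ρ * pd ρ (fun y => T y μ ν) z)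
        + (jac ζ z)ᵀ * Matrix.of (T z) + Matrix.of (T z) * jac ζ z := by
  ext μ ν
  simp only [lieG, jac, Matrix.of_apply, Matrix.add_apply, Matrix.mul_apply,
    Matrix.transpose_apply]
  congr 1
  exact Finset.sum_congr rfl fun ρ _ => mul_comm _ _

lemma hasDerivAt_pullback_variation {T : (Fin D → ℝ) → Fin D → Fin D → ℝ}
    {ζ : (Fin D → ℝ) → Fin D → ℝ} {X : (Fin n → ℝ) → Fin D → ℝ} {x : Fin n → ℝ}
    (hT : ∀ μ ν, DifferentiableAt ℝ (fun z => T z μ ν) (X x))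
    (hζ : ∀ μ, DifferentiableAt ℝ (fun z => ζ z μ) (X x))
    (hX : ∀ μ, DifferentiableAt ℝ (fun y => X y μ) x) (α β : Fin n) :
    HasDerivAt (fun t => pullback T (fun y μ => X y μ + t * ζ (X y) μ) x α β)
      (pullback (fun z μ ν => lieG T ζ μ ν z) X x α β) 0 := by
  have hJ : ∀ μ γ, HasDerivAt (fun t => jac (fun y μ => X y μ + t * ζ (X y) μ) x μ γ)
      ((jac ζ (X x) * jac X x) μ γ) 0 := by
    intro μ γ
    simp only [jac_variation hζ hX, Matrix.add_apply, Matrix.smul_apply, smul_eq_mul]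
    simpa using ((hasDerivAt_id (0 : ℝ)).mul_const ((jac ζ (X x) * jac X x) μ γ)).const_add
      (jac X x μ γ)
  have hM : ∀ μ ν, HasDerivAt (fun t : ℝ => Matrix.of (T (fun μ => X x μ + t * ζ (X x) μ)) μ ν)
      (Matrix.of (fun μ ν => ∑ ρ, ζ (X x) ρ * pd ρ (fun z => T z μ ν) (X x)) μ ν) 0 :=
    fun μ ν => hasDerivAt_comp_add_smul (hT μ ν) (ζ (X x))
  have h := hasDerivAt_matrix_mul_apply
    (hasDerivAt_matrix_mul_apply (A := fun t => (jac (fun y μ => X y μ + t * ζ (X y) μ) x)ᵀ)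
      (A' := (jac ζ (X x) * jac X x)ᵀ) (fun γ μ => hJ μ γ) hM) hJ α β
  simp only [zero_mul, add_zero] at h
  refine h.congr_deriv ?_
  rw [pullback, of_lieG]
  simp only [Matrix.transpose_mul, Matrix.add_mul, Matrix.mul_add, Matrix.mul_assoc]
  abel_nf

lemma pd_pullback₁ {c : (Fin D → ℝ) → Fin D → ℝ} {X : (Fin n → ℝ) → Fin D → ℝ}
    {x : Fin n → ℝ} (hc : ∀ μ, DifferentiableAt ℝ (fun z => c z μ) (X x))
    (hX : ∀ μ, ContDiff ℝ 2 fun y => X y μ) (α β : Fin n) :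
    pd α (fun y => pullback₁ c X y β) x
      = ∑ μ, c (X x) μ * pd α (pd β fun y => X y μ) x
        + pullback (fun z μ ν => pd μ (fun w => c w ν) z) X x α β := by
  have hXd : ∀ μ, DifferentiableAt ℝ (fun y => X y μ) x :=
    fun μ => (hX μ).differentiable two_ne_zero x
  have hcX : ∀ μ, DifferentiableAt ℝ (fun y => c (X y) μ) x :=
    fun μ => (hc μ).comp x (differentiableAt_pi.mpr hXd)
  have hpdX : ∀ μ, DifferentiableAt ℝ (pd β fun y => X y μ) x := fun μ =>
    ((hX μ).fderiv_right (m := 1) le_rfl).clm_apply contDiff_const |>.differentiable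
      one_ne_zero x
  unfold pullback₁
  rw [pd_sum (f := fun μ y => c (X y) μ * pd β (fun z => X z μ) y)
    fun μ _ => (hcX μ).mul (hpdX μ), pullback_apply, Finset.sum_comm,
    ← Finset.sum_add_distrib]
  refine Finset.sum_congr rfl fun μ _ => ?_
  rw [pd_mul (hcX μ) (hpdX μ), pd_comp (hc μ) hXd, Finset.mul_sum]
  congr 1
  exact Finset.sum_congr rfl fun ν _ => by ring

lemma pd_pullback₁_sub_pd_pullback₁ {c : (Fin D → ℝ) → Fin D → ℝ}
    {X : (Fin n → ℝ) → Fin D → ℝ} {x : Fin n → ℝ} (hc : ∀ μ, DifferentiableAt ℝ (fun z => c z μ) (X x))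
    (hX : ∀ μ, ContDiff ℝ 2 fun y => X y μ) (α β : Fin n) :
    pd α (fun y => pullback₁ c X y β) x - pd β (fun y => pullback₁ c X y α) x
      = pullback (curl c) X x α β := by
  have hsymm : ∀ μ, pd β (pd α fun y => X y μ) x = pd α (pd β fun y => X y μ) x :=
    fun μ => pd_comm (hX μ) β α x
  rw [pd_pullback₁ hc hX, pd_pullback₁ hc hX, ← pullback_swap _ X x α β]
  simp only [hsymm, add_sub_add_left_eq_sub, pullback_apply, curl, ← Finset.sum_sub_distrib,
    mul_sub]

end Pullback

lemma Lag_eq_pullback {D : ℕ} (G B : (Fin D → ℝ) → Fin D → Fin D → ℝ)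
    (g : (Fin 2 → ℝ) → Matrix (Fin 2) (Fin 2) ℝ) (X : (Fin 2 → ℝ) → Fin D → ℝ)
    (x : Fin 2 → ℝ) :
    Lag G B g X x = (Real.sqrt (-(g x).det) * ∑ α, ∑ β, (g x)⁻¹ α β * pullback G X x α β) / 2
      + pullback B X x 0 1 := by
  simp only [Lag, pullback_apply]
  congr 1
  exact Finset.sum_congr rfl fun μ _ => Finset.sum_congr rfl fun ν _ => by ring

lemma hasDerivAt_Lag_variation {D : ℕ} {G B : (Fin D → ℝ) → Fin D → Fin D → ℝ}
    (g : (Fin 2 → ℝ) → Matrix (Fin 2) (Fin 2) ℝ) {ζ : (Fin D → ℝ) → Fin D → ℝ}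
    {X : (Fin 2 → ℝ) → Fin D → ℝ} {x : Fin 2 → ℝ}
    (hG : ∀ μ ν, DifferentiableAt ℝ (fun z => G z μ ν) (X x))
    (hB : ∀ μ ν, DifferentiableAt ℝ (fun z => B z μ ν) (X x))
    (hζ : ∀ μ, DifferentiableAt ℝ (fun z => ζ z μ) (X x))
    (hX : ∀ μ, DifferentiableAt ℝ (fun y => X y μ) x) :
    HasDerivAt (fun t => Lag G B g (fun y μ => X y μ + t * ζ (X y) μ) x)
      ((Real.sqrt (-(g x).det) * ∑ α, ∑ β,
          (g x)⁻¹ α β * pullback (fun z μ ν => lieG G ζ μ ν z) X x α β) / 2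
        + pullback (fun z μ ν => lieG B ζ μ ν z) X x 0 1) 0 := by
  simp only [Lag_eq_pullback]
  refine HasDerivAt.add ?_ (hasDerivAt_pullback_variation hB hζ hX 0 1)
  refine HasDerivAt.div_const (HasDerivAt.const_mul _ ?_) 2
  exact HasDerivAt.fun_sum fun α _ => HasDerivAt.fun_sum fun β _ =>
    HasDerivAt.const_mul _ (hasDerivAt_pullback_variation hG hζ hX α β)

theorem stmt16_general {D : ℕ}
    (G B : (Fin D → ℝ) → Fin D → Fin D → ℝ)
    (hGs : Smooth2T G) (hGsym : ∀ x μ ν, G x μ ν = G x ν μ)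
    (hBs : Smooth2T B) (hBanti : ∀ x μ ν, B x μ ν = -B x ν μ)
    (g : (Fin 2 → ℝ) → Matrix (Fin 2) (Fin 2) ℝ)
    (ζ b : (Fin D → ℝ) → Fin D → ℝ) (hζ : SmoothVF ζ) (hb : SmoothVF b)
    (hK : IsKillingPair G B ζ b)
    (X : (Fin 2 → ℝ) → Fin D → ℝ) (hX : ∀ μ, ContDiff ℝ (⊤ : ℕ∞) fun y => X y μ)
    (x : Fin 2 → ℝ) :
    deriv (fun t : ℝ => Lag G B g (fun y μ => X y μ + t * ζ (X y) μ) x) 0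
      = pd 1 (fun y => ∑ μ,
            (b (X y) μ + ∑ ν, B (X y) μ ν * ζ (X y) ν) * pd 0 (fun z => X z μ) y) x
        - pd 0 (fun y => ∑ μ,
            (b (X y) μ + ∑ ν, B (X y) μ ν * ζ (X y) ν) * pd 1 (fun z => X z μ) y) x := by
  have hBd : ∀ z μ ν, DifferentiableAt ℝ (fun y => B y μ ν) z :=
    fun z μ ν => (hBs μ ν).differentiable z
  have hζd : ∀ z μ, DifferentiableAt ℝ (fun y => ζ y μ) z := fun z μ => (hζ μ).differentiable z
  have hbTilde : ∀ μ, Sm fun z => bTilde B ζ b z μ := fun μ =>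
    ContDiff.add (hb μ) (ContDiff.sum fun ν _ => ContDiff.mul (hBs μ ν) (hζ ν))
  have hLieG : (fun z μ ν => lieG G ζ μ ν z) = fun _ _ _ => 0 := by
    funext z μ ν
    exact hK.lieG_eq_zero hGsym hBanti μ ν z
  have hLieB : (fun z μ ν => lieG B ζ μ ν z) = fun z μ ν => curl (bTilde B ζ b) z ν μ := by
    funext z μ ν
    exact hK.lieG_eq_curl_bTilde hGsym hBanti (hBd z) (hζd z)
      (fun μ => (hb μ).differentiable z) μ ν
  rw [(hasDerivAt_Lag_variation g (fun μ ν => (hGs μ ν).differentiable _) (hBd _) (hζd _)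
    fun μ => (hX μ).differentiable (by simp) x).deriv, hLieG, hLieB, pullback_zero,
    pullback_swap]
  simp only [Matrix.zero_apply, mul_zero, Finset.sum_const_zero, zero_div, zero_add]
  exact (pd_pullback₁_sub_pd_pullback₁ (fun μ => (hbTilde μ).differentiable _)
    (fun μ => (hX μ).of_le (WithTop.coe_le_coe.2 le_top)) 1 0).symm

/-- A Killing pair generates a rigid symmetry of the sigma model: the first variation of the
Lagrangian under `δX^μ = ζ^μ(X)` is the total divergence
`∂₋(b̃_μ(X)∂₊X^μ) − ∂₊(b̃_μ(X)∂₋X^μ)` with `b̃_μ = b_μ + B_{μν}ζ^ν`. -/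
theorem stmt16 {D : ℕ} (hD : 1 ≤ D)
    (G B : (Fin D → ℝ) → Fin D → Fin D → ℝ)
    (hGs : Smooth2T G) (hGsym : ∀ x μ ν, G x μ ν = G x ν μ)
    (hBs : Smooth2T B) (hBanti : ∀ x μ ν, B x μ ν = -B x ν μ)
    (g : (Fin 2 → ℝ) → Matrix (Fin 2) (Fin 2) ℝ)
    (hgs : ∀ α β, ContDiff ℝ (⊤ : ℕ∞) fun x => g x α β)
    (hgsym : ∀ x α β, g x α β = g x β α)
    (hgdet : ∀ x, (g x).det < 0)
    (ζ b : (Fin D → ℝ) → Fin D → ℝ) (hζ : SmoothVF ζ) (hb : SmoothVF b)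
    (hK : IsKillingPair G B ζ b)
    (X : (Fin 2 → ℝ) → Fin D → ℝ) (hX : ∀ μ, ContDiff ℝ (⊤ : ℕ∞) fun y => X y μ)
    (x : Fin 2 → ℝ) :
    deriv (fun t : ℝ => Lag G B g (fun y μ => X y μ + t * ζ (X y) μ) x) 0
      = pd 1 (fun y => ∑ μ,
            (b (X y) μ + ∑ ν, B (X y) μ ν * ζ (X y) ν) * pd 0 (fun z => X z μ) y) x
        - pd 0 (fun y => ∑ μ,
            (b (X y) μ + ∑ ν, B (X y) μ ν * ζ (X y) ν) * pd 1 (fun z => X z μ) y) x :=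
  stmt16_general G B hGs hGsym hBs hBanti g ζ b hζ hb hK X hX x
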